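/- Fix κ ≥ 0 and let A ∈ C²(ℝ, M²) be the solution of the initial value problem Ä + κA = Λ(A,Ȧ)·cof A with data (A₀,B₀) ∈ D satisfying |A₀|² > 2, and set Xᵢ = Xᵢ(A₀,B₀). Then |A(t)| = |A₀| for all t ∈ ℝ (A is rigid) if and only if both X₁ = ½( X₂²/(½|A₀|²−1) + X₃²/(½|A₀|²+1) ) + (κ/2)|A₀|² and X₂²/(½|A₀|²−1)² + X₃²/(½|A₀|²+1)² = 2κ hold. -/

import Mathlib

open Matrix

noncomputable section

/-- `M²`: the space of 2×2 real matrices. -/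
abbrev M2 : Type := Matrix (Fin 2) (Fin 2) ℝ

/-- Frobenius inner product `⟨A,B⟩ = tr(AᵀB)`. -/
def mip (A B : M2) : ℝ := (Aᵀ * B).trace

/-- Frobenius norm `|A| = ⟨A,A⟩^{1/2}`. -/
def fnorm (A : M2) : ℝ := Real.sqrt (mip A A)

/-- The matrix Z = [[0,−1],[1,0]]. -/
def Zm : M2 := !![0, -1; 1, 0]

/-- The matrix K = [[1,0],[0,−1]]. -/
def Km : M2 := !![1, 0; 0, -1]

/-- The matrix M = [[0,1],[1,0]]. -/
def Mm : M2 := !![0, 1; 1, 0]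

/-- Cofactor: cof [[a,b],[c,d]] = [[d,−c],[−b,a]]. -/
def cofm (A : M2) : M2 := !![A 1 1, -(A 1 0); -(A 0 1), A 0 0]

/-- Membership in SO(2,ℝ). -/
def isSO (U : M2) : Prop := U.det = 1 ∧ U⁻¹ = Uᵀ

/-- The rotation U(θ) = cos θ·I + sin θ·Z. -/
def Um (θ : ℝ) : M2 := Real.cos θ • (1 : M2) + Real.sin θ • Zm

/-- Invariant X₁(A,B) = ½|B|² + (κ/2)|A|². -/
def X1 (κ : ℝ) (A B : M2) : ℝ := (1/2) * mip B B + (κ/2) * mip A A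

/-- Invariant X₂(A,B) = ½⟨ZA − AZ, B⟩. -/
def X2 (A B : M2) : ℝ := (1/2) * mip (Zm * A - A * Zm) B

/-- Invariant X₃(A,B) = ½⟨ZA + AZ, B⟩. -/
def X3 (A B : M2) : ℝ := (1/2) * mip (Zm * A + A * Zm) B

/-- Lagrange multiplier Λ(A,B) = 2(κ − det B)/|A|². -/
def Lam (κ : ℝ) (A B : M2) : ℝ := 2 * (κ - B.det) / (mip A A)

attribute [local instance] Matrix.normedAddCommGroup Matrix.normedSpace

/-!
Writing `B = Ȧ`, the pair `(A, B)` solves a first-order system whose vector field is smooth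
wherever `A ≠ 0`. Along a solution, `u = (det A - 1, ⟨B, cof A⟩)` satisfies the linear system
`u₁' = u₂, u₂' = -2κ u₁` as long as `A ≠ 0`, so `D` is invariant; then `|A|² ≥ 2 det A = 2`
throughout and solutions are unique.

If `|A|` is constant, differentiating `|A|²` twice at `t = 0` gives `⟨A₀, B₀⟩ = 0` and
`|B₀|² + 2Λ = κ|A₀|²`; two Lagrange-type identities express `X₂²` and `X₃²` through `|B₀|²` and
`det B₀`, and the two conditions follow. Conversely, the conditions say that a sum of squares
vanishes, which forces `B₀ = a Z A₀ + b A₀ Z` with `a² + b² = κ`; then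
`t ↦ U(at) A₀ U(bt)` solves the equation with the same data and has constant norm, so by
uniqueness it is `A`.
-/

open Filter Topology

lemma mip_eq (A B : M2) :
    mip A B = A 0 0 * B 0 0 + A 0 1 * B 0 1 + A 1 0 * B 1 0 + A 1 1 * B 1 1 := by
  simp only [mip, Matrix.trace, Matrix.diag, Matrix.mul_apply, Matrix.transpose_apply,
    Fin.sum_univ_two]
  ring

lemma mip_eq_sum (A B : M2) : mip A B = ∑ i, ∑ j, A i j * B i j := by
  simp only [mip, Matrix.trace, Matrix.diag, Matrix.mul_apply, Matrix.transpose_apply]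
  exact Finset.sum_comm

lemma mip_comm (A B : M2) : mip A B = mip B A := by
  rw [mip_eq, mip_eq]; ring

lemma mip_self_nonneg (A : M2) : 0 ≤ mip A A := by
  rw [mip_eq_sum]
  exact Finset.sum_nonneg fun i _ => Finset.sum_nonneg fun j _ => mul_self_nonneg _

lemma mip_self_eq_zero {A : M2} : mip A A = 0 ↔ A = 0 := by
  simp only [mip_eq_sum, ← Matrix.ext_iff, Matrix.zero_apply, Finset.sum_eq_zero_iff_of_nonneg,
    Finset.mem_univ, mul_self_nonneg, implies_true, Finset.sum_nonneg, mul_self_eq_zero,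
    forall_const]

lemma mip_self_pos_of_det_eq_one {A : M2} (h : A.det = 1) : 0 < mip A A := by
  rw [Matrix.det_fin_two] at h
  rw [mip_eq]
  nlinarith [sq_nonneg (A 0 0 - A 1 1), sq_nonneg (A 0 1 + A 1 0)]

lemma mip_cofm_self (A : M2) : mip (cofm A) A = 2 * A.det := by
  simp only [mip_eq, cofm, Matrix.det_fin_two, Matrix.of_apply, Matrix.cons_val',
    Matrix.cons_val_zero, Matrix.cons_val_one, Matrix.empty_val', Matrix.cons_val_fin_one]
  ring

lemma mip_cofm_cofm (A : M2) : mip (cofm A) (cofm A) = mip A A := by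
  simp only [mip_eq, cofm, Matrix.of_apply, Matrix.cons_val', Matrix.cons_val_zero,
    Matrix.cons_val_one, Matrix.empty_val', Matrix.cons_val_fin_one]
  ring

lemma mip_smul_right (A B : M2) (c : ℝ) : mip A (c • B) = c * mip A B := by
  simp [mip]

lemma mip_sub_right (A B C : M2) : mip A (B - C) = mip A B - mip A C := by
  simp [mip, Matrix.mul_sub]

lemma Zm_mul_Zm : Zm * Zm = -1 := by
  ext i j; fin_cases i <;> fin_cases j <;> simp [Zm]

lemma cofm_eq_neg_Zm_mul_mul_Zm (X : M2) : cofm X = -(Zm * X * Zm) := by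
  ext i j
  fin_cases i <;> fin_cases j <;>
    simp [Zm, cofm, Matrix.mul_apply, Matrix.vecMul, dotProduct, Fin.sum_univ_two]

lemma X3_sq (A B : M2) : X3 A B ^ 2 = (1/2 * mip A A + A.det) * (1/2 * mip B B + B.det)
    - 1/4 * (mip A B + mip B (cofm A)) ^ 2 := by
  simp only [X3, mip_eq, Matrix.det_fin_two, Matrix.add_apply, Matrix.mul_apply, Fin.sum_univ_two,
    Zm, cofm, Matrix.of_apply, Matrix.cons_val', Matrix.cons_val_zero, Matrix.cons_val_one,
    Matrix.empty_val', Matrix.cons_val_fin_one]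
  ring

lemma X2_sq (A B : M2) : X2 A B ^ 2 = (1/2 * mip A A - A.det) * (1/2 * mip B B - B.det)
    - 1/4 * (mip A B - mip B (cofm A)) ^ 2 := by
  simp only [X2, mip_eq, Matrix.det_fin_two, Matrix.sub_apply, Matrix.mul_apply, Fin.sum_univ_two,
    Zm, cofm, Matrix.of_apply, Matrix.cons_val', Matrix.cons_val_zero, Matrix.cons_val_one,
    Matrix.empty_val', Matrix.cons_val_fin_one]
  ring

theorem HasDerivAt.matrix_mul {m n p : Type*} [Fintype m] [Fintype n] [Fintype p]
    {F : ℝ → Matrix m n ℝ} {G : ℝ → Matrix n p ℝ} {F' : Matrix m n ℝ} {G' : Matrix n p ℝ}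
    {t : ℝ} (hF : HasDerivAt F F' t) (hG : HasDerivAt G G' t) :
    HasDerivAt (fun s => F s * G s) (F' * G t + F t * G') t := by
  refine hasDerivAt_pi.2 fun i => hasDerivAt_pi.2 fun k => ?_
  have hFe j := hasDerivAt_pi.1 (hasDerivAt_pi.1 hF i) j
  have hGe j := hasDerivAt_pi.1 (hasDerivAt_pi.1 hG j) k
  simp only [Matrix.add_apply, Matrix.mul_apply, ← Finset.sum_add_distrib]
  exact HasDerivAt.fun_sum fun j _ => (hFe j).mul (hGe j)

theorem hasDerivAt_mip {F G : ℝ → M2} {F' G' : M2} {t : ℝ}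
    (hF : HasDerivAt F F' t) (hG : HasDerivAt G G' t) :
    HasDerivAt (fun s => mip (F s) (G s)) (mip F' (G t) + mip (F t) G') t := by
  have hFe i j := hasDerivAt_pi.1 (hasDerivAt_pi.1 hF i) j
  have hGe i j := hasDerivAt_pi.1 (hasDerivAt_pi.1 hG i) j
  simp only [mip_eq_sum, ← Finset.sum_add_distrib]
  exact HasDerivAt.fun_sum fun i _ => HasDerivAt.fun_sum fun j _ => (hFe i j).mul (hGe i j)

theorem hasDerivAt_det_fin_two {F : ℝ → M2} {F' : M2} {t : ℝ} (hF : HasDerivAt F F' t) :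
    HasDerivAt (fun s => (F s).det) (mip (cofm (F t)) F') t := by
  have hFe i j := hasDerivAt_pi.1 (hasDerivAt_pi.1 hF i) j
  simp only [Matrix.det_fin_two, mip_eq, cofm, Matrix.of_apply, Matrix.cons_val',
    Matrix.cons_val_zero, Matrix.cons_val_one, Matrix.empty_val', Matrix.cons_val_fin_one]
  exact (((hFe 0 0).mul (hFe 1 1)).sub ((hFe 0 1).mul (hFe 1 0))).congr_deriv (by ring)

theorem hasDerivAt_cofm {F : ℝ → M2} {F' : M2} {t : ℝ} (hF : HasDerivAt F F' t) :
    HasDerivAt (fun s => cofm (F s)) (cofm F') t := by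
  have hFe i j := hasDerivAt_pi.1 (hasDerivAt_pi.1 hF i) j
  refine hasDerivAt_pi.2 fun i => hasDerivAt_pi.2 fun j => ?_
  fin_cases i <;> fin_cases j
  exacts [hFe 1 1, (hFe 1 0).neg, (hFe 0 1).neg, hFe 0 0]

@[fun_prop]
lemma contDiff_mip {n : WithTop ℕ∞} : ContDiff ℝ n (fun W : M2 × M2 => mip W.1 W.2) := by
  simp only [mip_eq_sum]
  fun_prop

@[fun_prop]
lemma contDiff_det_fin_two {n : WithTop ℕ∞} : ContDiff ℝ n (Matrix.det : M2 → ℝ) := by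
  simp only [funext Matrix.det_fin_two]
  fun_prop

@[fun_prop]
lemma contDiff_cofm {n : WithTop ℕ∞} : ContDiff ℝ n cofm := by
  refine contDiff_pi.2 fun i => contDiff_pi.2 fun j => ?_
  fin_cases i <;> fin_cases j
  exacts [contDiff_apply_apply ℝ ℝ 1 1, (contDiff_apply_apply ℝ ℝ 1 0).neg,
    (contDiff_apply_apply ℝ ℝ 0 1).neg, contDiff_apply_apply ℝ ℝ 0 0]

theorem Continuous.eq_of_eventuallyEq_of_eq {α E : Type*} [TopologicalSpace α]
    [PreconnectedSpace α] [TopologicalSpace E] [T2Space E] {f g : α → E} (hf : Continuous f)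
    (hg : Continuous g) (hloc : ∀ t, f t = g t → f =ᶠ[𝓝 t] g) {t₀ : α} (h₀ : f t₀ = g t₀) :
    f = g := by
  have hclopen : IsClopen {t | f t = g t} := ⟨isClosed_eq hf hg, isOpen_iff_mem_nhds.2 hloc⟩
  funext t
  exact (hclopen.eq_univ ⟨t₀, h₀⟩).symm.subset (Set.mem_univ t)

theorem ODE_solution_unique_of_contDiffAt {E : Type*} [NormedAddCommGroup E] [NormedSpace ℝ E]
    {F : E → E} {f g : ℝ → E} {t₀ : ℝ} (hF : ∀ t, ContDiffAt ℝ 1 F (f t))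
    (hf : ∀ t, HasDerivAt f (F (f t)) t) (hg : ∀ t, HasDerivAt g (F (g t)) t)
    (h₀ : f t₀ = g t₀) : f = g := by
  refine Continuous.eq_of_eventuallyEq_of_eq
    (continuous_iff_continuousAt.2 fun t => (hf t).continuousAt)
    (continuous_iff_continuousAt.2 fun t => (hg t).continuousAt) (fun t ht => ?_) h₀
  obtain ⟨K, V, hV, hK⟩ := (hF t).exists_lipschitzOnWith
  have hfV : ∀ᶠ s in 𝓝 t, f s ∈ V := (hf t).continuousAt hV
  have hgV : ∀ᶠ s in 𝓝 t, g s ∈ V := (hg t).continuousAt (ht ▸ hV)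
  exact ODE_solution_unique_of_eventually (v := fun _ => F) (s := fun _ => V)
    (Eventually.of_forall fun _ => hK) (hfV.mono fun s hs => ⟨hf s, hs⟩)
    (hgV.mono fun s hs => ⟨hg s, hs⟩) ht

def accel (κ : ℝ) (A B : M2) : M2 := Lam κ A B • cofm A - κ • A

def flowField (κ : ℝ) (W : M2 × M2) : M2 × M2 := (W.2, accel κ W.1 W.2)

lemma contDiffAt_flowField (κ : ℝ) {W : M2 × M2} (hW : mip W.1 W.1 ≠ 0) :
    ContDiffAt ℝ 1 (flowField κ) W := by
  unfold flowField accel Lam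
  fun_prop (disch := exact hW)

lemma mip_accel (κ : ℝ) {A : M2} (hdet : A.det = 1) (B : M2) :
    mip A (accel κ A B) = 2 * Lam κ A B - κ * mip A A := by
  rw [accel, mip_sub_right, mip_smul_right, mip_smul_right, mip_comm A (cofm A), mip_cofm_self,
    hdet]
  ring

-- The set `D`: the tangent bundle of `SL(2, ℝ)`, since `d(det)_A = ⟨cof A, ·⟩`.
def tangentSL2 : Set (M2 × M2) := {W | W.1.det = 1 ∧ mip W.2 (cofm W.1) = 0}

lemma mip_accel_cofm_add {κ : ℝ} {A : M2} (hA : mip A A ≠ 0) (B : M2) :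
    mip (accel κ A B) (cofm A) + mip B (cofm B) = -(2 * κ) * (A.det - 1) := by
  rw [mip_comm, accel, mip_sub_right, mip_smul_right, mip_smul_right, mip_cofm_cofm,
    mip_cofm_self, mip_comm B, mip_cofm_self, Lam]
  field_simp
  ring

theorem mem_tangentSL2_of_hasDerivAt {κ : ℝ} {A B : ℝ → M2} {t₀ : ℝ}
    (hA : ∀ t, HasDerivAt A (B t) t) (hB : ∀ t, HasDerivAt B (accel κ (A t) (B t)) t)
    (h₀ : (A t₀, B t₀) ∈ tangentSL2) (t : ℝ) : (A t, B t) ∈ tangentSL2 := by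
  set u : ℝ → ℝ × ℝ := fun t => ((A t).det - 1, mip (B t) (cofm (A t)))
  have hu t : HasDerivAt u (mip (cofm (A t)) (B t),
      mip (accel κ (A t) (B t)) (cofm (A t)) + mip (B t) (cofm (B t))) t :=
    ((hasDerivAt_det_fin_two (hA t)).sub_const 1).prodMk
      (hasDerivAt_mip (hB t) (hasDerivAt_cofm (hA t)))
  let L : ℝ × ℝ →L[ℝ] ℝ × ℝ :=
    (ContinuousLinearMap.snd ℝ ℝ ℝ).prod (-(2 * κ) • ContinuousLinearMap.fst ℝ ℝ ℝ)
  have hlin t (ht : mip (A t) (A t) ≠ 0) : HasDerivAt u (L (u t)) t := by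
    refine (hu t).congr_deriv ?_
    simp [L, u, mip_accel_cofm_add ht, mip_comm (cofm (A t))]
  have hmip : Continuous fun t => mip (A t) (A t) :=
    continuous_iff_continuousAt.2 fun t => (hasDerivAt_mip (hA t) (hA t)).continuousAt
  have hu0 : u = 0 := by
    refine Continuous.eq_of_eventuallyEq_of_eq
      (continuous_iff_continuousAt.2 fun t => (hu t).continuousAt) continuous_const
      (fun t ht => ?_) (show u t₀ = 0 by simp [u, h₀.1, h₀.2])
    have hdet : (A t).det = 1 := by simpa [u, sub_eq_zero] using congrArg Prod.fst ht
    have hpos := mip_self_pos_of_det_eq_one hdet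
    have hev : ∀ᶠ s in 𝓝 t, mip (A s) (A s) ≠ 0 :=
      (hmip.continuousAt.eventually (lt_mem_nhds hpos)).mono fun s hs => hs.ne'
    exact ODE_solution_unique_of_eventually (v := fun _ => L) (s := fun _ => Set.univ)
      (Eventually.of_forall fun _ => L.lipschitz.lipschitzOnWith)
      (hev.mono fun s hs => ⟨hlin s hs, trivial⟩)
      (Eventually.of_forall fun s => ⟨by simp, trivial⟩) ht
  simpa [u, sub_eq_zero, tangentSL2] using congrFun hu0 t

lemma Um_zero : Um 0 = 1 := by
  simp [Um]

lemma Um_mul_Zm (θ : ℝ) : Um θ * Zm = Zm * Um θ := by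
  simp [Um, add_mul, mul_add]

lemma hasDerivAt_Um (θ : ℝ) : HasDerivAt Um (Zm * Um θ) θ := by
  refine (((Real.hasDerivAt_cos θ).smul_const (1 : M2)).add
    ((Real.hasDerivAt_sin θ).smul_const Zm)).congr_deriv ?_
  simp only [Um, mul_add, Matrix.mul_smul, mul_one, Zm_mul_Zm]
  module

lemma hasDerivAt_Um_mul (a t : ℝ) :
    HasDerivAt (fun s => Um (a * s)) (a • (Zm * Um (a * t))) t :=
  (hasDerivAt_Um (a * t)).scomp t ((hasDerivAt_id t).const_mul a) |>.congr_deriv (by simp)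

lemma Um_eq (θ : ℝ) : Um θ = !![Real.cos θ, -Real.sin θ; Real.sin θ, Real.cos θ] := by
  ext i j
  fin_cases i <;> fin_cases j <;> simp [Um, Zm]

lemma det_Um (θ : ℝ) : (Um θ).det = 1 := by
  rw [Um_eq, Matrix.det_fin_two_of]
  linear_combination Real.cos_sq_add_sin_sq θ

lemma mip_Um_mul_self (θ : ℝ) (X : M2) : mip (Um θ * X) (Um θ * X) = mip X X := by
  simp only [mip_eq, Um_eq, Matrix.mul_apply, Fin.sum_univ_two, Matrix.of_apply, Matrix.cons_val',
    Matrix.cons_val_zero, Matrix.cons_val_one, Matrix.empty_val', Matrix.cons_val_fin_one]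
  linear_combination (X 0 0 ^ 2 + X 0 1 ^ 2 + X 1 0 ^ 2 + X 1 1 ^ 2) * Real.sin_sq_add_cos_sq θ

lemma mip_mul_Um_self (θ : ℝ) (X : M2) : mip (X * Um θ) (X * Um θ) = mip X X := by
  simp only [mip_eq, Um_eq, Matrix.mul_apply, Fin.sum_univ_two, Matrix.of_apply, Matrix.cons_val',
    Matrix.cons_val_zero, Matrix.cons_val_one, Matrix.empty_val', Matrix.cons_val_fin_one]
  linear_combination (X 0 0 ^ 2 + X 0 1 ^ 2 + X 1 0 ^ 2 + X 1 1 ^ 2) * Real.sin_sq_add_cos_sq θ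

def rotGen (a b : ℝ) (X : M2) : M2 := a • (Zm * X) + b • (X * Zm)

def rotationCurve (a b : ℝ) (X : M2) (t : ℝ) : M2 := Um (a * t) * X * Um (b * t)

lemma rotationCurve_zero (a b : ℝ) (X : M2) : rotationCurve a b X 0 = X := by
  simp [rotationCurve, Um_zero]

lemma rotGen_rotationCurve (a b : ℝ) (X : M2) (t : ℝ) :
    rotGen a b (rotationCurve a b X t) = rotationCurve a b (rotGen a b X) t := by
  simp only [rotGen, rotationCurve, mul_add, add_mul, Matrix.mul_smul, Matrix.smul_mul, mul_assoc,
    Um_mul_Zm]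
  simp only [← mul_assoc, Um_mul_Zm]

lemma hasDerivAt_rotationCurve (a b : ℝ) (X : M2) (t : ℝ) :
    HasDerivAt (rotationCurve a b X) (rotGen a b (rotationCurve a b X t)) t := by
  refine (((hasDerivAt_Um_mul a t).matrix_mul (hasDerivAt_const t X)).matrix_mul
    (hasDerivAt_Um_mul b t)).congr_deriv ?_
  simp only [rotGen, rotationCurve, mul_zero, add_zero, Matrix.mul_smul, Matrix.smul_mul,
    mul_assoc, Um_mul_Zm]

lemma det_rotationCurve (a b : ℝ) (X : M2) (t : ℝ) : (rotationCurve a b X t).det = X.det := by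
  simp [rotationCurve, det_Um]

lemma mip_rotationCurve_self (a b : ℝ) (X : M2) (t : ℝ) :
    mip (rotationCurve a b X t) (rotationCurve a b X t) = mip X X := by
  rw [rotationCurve, mip_mul_Um_self, mip_Um_mul_self]

lemma rotGen_rotGen (a b : ℝ) (X : M2) :
    rotGen a b (rotGen a b X) = -(a ^ 2 + b ^ 2) • X - (2 * a * b) • cofm X := by
  have hl : Zm * (Zm * X) = -X := by rw [← mul_assoc, Zm_mul_Zm, neg_one_mul]
  have hr : X * Zm * Zm = -X := by rw [mul_assoc, Zm_mul_Zm, mul_neg_one]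
  simp only [rotGen, cofm_eq_neg_Zm_mul_mul_Zm, mul_add, add_mul, Matrix.mul_smul,
    Matrix.smul_mul, hl, hr, mul_assoc]
  module

lemma det_rotGen (a b : ℝ) (X : M2) :
    (rotGen a b X).det = (a ^ 2 + b ^ 2) * X.det + a * b * mip X X := by
  simp only [rotGen, Matrix.det_fin_two, mip_eq, Matrix.add_apply, Matrix.smul_apply, smul_eq_mul,
    Matrix.mul_apply, Fin.sum_univ_two, Zm, Matrix.of_apply, Matrix.cons_val', Matrix.cons_val_zero,
    Matrix.cons_val_one, Matrix.empty_val', Matrix.cons_val_fin_one]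
  ring

lemma accel_rotGen {κ a b : ℝ} (hκ : a ^ 2 + b ^ 2 = κ) {X : M2} (hdet : X.det = 1)
    (hX : mip X X ≠ 0) : accel κ X (rotGen a b X) = rotGen a b (rotGen a b X) := by
  have hLam : Lam κ X (rotGen a b X) = -(2 * a * b) := by
    rw [Lam, det_rotGen, hdet, hκ]
    field_simp
    ring
  rw [accel, hLam, rotGen_rotGen, hκ]
  module

lemma hasDerivAt_rotationPhase {κ a b : ℝ} (hκ : a ^ 2 + b ^ 2 = κ) {X : M2} (hdet : X.det = 1)
    (hX : mip X X ≠ 0) (t : ℝ) :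
    HasDerivAt (fun s => (rotationCurve a b X s, rotationCurve a b (rotGen a b X) s))
      (flowField κ (rotationCurve a b X t, rotationCurve a b (rotGen a b X) t)) t := by
  refine ((hasDerivAt_rotationCurve a b X t).prodMk
    (hasDerivAt_rotationCurve a b _ t)).congr_deriv ?_
  rw [flowField, ← rotGen_rotationCurve, accel_rotGen hκ (by rw [det_rotationCurve, hdet])
    (by rwa [mip_rotationCurve_self])]

def RigidityConditions (κ : ℝ) (A B : M2) : Prop :=
  X1 κ A B = (1/2) * (X2 A B ^ 2 / ((1/2) * mip A A - 1)
      + X3 A B ^ 2 / ((1/2) * mip A A + 1)) + (κ/2) * mip A A ∧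
    X2 A B ^ 2 / ((1/2) * mip A A - 1) ^ 2 + X3 A B ^ 2 / ((1/2) * mip A A + 1) ^ 2 = 2 * κ

theorem rigidityConditions_of_mip_eq_zero {κ : ℝ} {A B : M2} (hdet : A.det = 1)
    (htan : mip B (cofm A) = 0) (hA : 2 < mip A A) (horth : mip A B = 0)
    (henergy : mip B B + mip A (accel κ A B) = 0) : RigidityConditions κ A B := by
  have hminus : 1/2 * mip A A - 1 ≠ 0 := by linarith
  have hplus : 1/2 * mip A A + 1 ≠ 0 := by linarith
  have h2 : X2 A B ^ 2 = (1/2 * mip A A - 1) * (1/2 * mip B B - B.det) := by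
    rw [X2_sq, hdet, horth, htan]; ring
  have h3 : X3 A B ^ 2 = (1/2 * mip A A + 1) * (1/2 * mip B B + B.det) := by
    rw [X3_sq, hdet, horth, htan]; ring
  rw [mip_accel κ hdet, Lam] at henergy
  field_simp at henergy
  constructor
  · rw [X1, h2, h3, mul_div_cancel_left₀ _ hminus, mul_div_cancel_left₀ _ hplus]
    ring
  · rw [h2, h3, sq (1/2 * mip A A - 1), sq (1/2 * mip A A + 1), mul_div_mul_left _ _ hminus,
      mul_div_mul_left _ _ hplus, div_add_div _ _ hminus hplus,
      div_eq_iff (mul_ne_zero hminus hplus)]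
    linear_combination henergy / 2

lemma mip_sub_rotGen_self {A : M2} (hdet : A.det = 1) (B : M2) (a b : ℝ) :
    mip (B - rotGen a b A) (B - rotGen a b A) = mip B B - 2 * (a + b) * X3 A B
      - 2 * (a - b) * X2 A B + (a + b) ^ 2 * (1/2 * mip A A + 1)
      + (a - b) ^ 2 * (1/2 * mip A A - 1) := by
  rw [Matrix.det_fin_two] at hdet
  simp only [rotGen, X2, X3, mip_eq, Matrix.add_apply, Matrix.sub_apply, Matrix.smul_apply,
    smul_eq_mul, Matrix.mul_apply, Fin.sum_univ_two, Zm, Matrix.of_apply, Matrix.cons_val',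
    Matrix.cons_val_zero, Matrix.cons_val_one, Matrix.empty_val', Matrix.cons_val_fin_one]
  linear_combination (4 * a * b) * hdet

theorem exists_eq_rotGen_of_rigidityConditions {κ : ℝ} {A B : M2} (hdet : A.det = 1)
    (hA : 2 < mip A A) (h : RigidityConditions κ A B) :
    ∃ a b : ℝ, a ^ 2 + b ^ 2 = κ ∧ B = rotGen a b A := by
  obtain ⟨hX1, hκ⟩ := h
  have hminus : 1/2 * mip A A - 1 ≠ 0 := by linarith
  have hplus : 1/2 * mip A A + 1 ≠ 0 := by linarith
  -- `a + b = φ` and `a - b = ψ` minimize the quadratic form in `mip_sub_rotGen_self`; the first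
  -- condition says that its minimum is `0`.
  set φ := X3 A B / (1/2 * mip A A + 1) with hφ
  set ψ := X2 A B / (1/2 * mip A A - 1) with hψ
  refine ⟨(φ + ψ) / 2, (φ - ψ) / 2, ?_, ?_⟩
  · have hsq : φ ^ 2 + ψ ^ 2 = 2 * κ := by rw [hφ, hψ, div_pow, div_pow, add_comm]; exact hκ
    linear_combination hsq / 2
  · have hzero : mip (B - rotGen ((φ + ψ) / 2) ((φ - ψ) / 2) A)
        (B - rotGen ((φ + ψ) / 2) ((φ - ψ) / 2) A) = 0 := by
      rw [mip_sub_rotGen_self hdet, show (φ + ψ) / 2 + (φ - ψ) / 2 = φ by ring,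
        show (φ + ψ) / 2 - (φ - ψ) / 2 = ψ by ring, hφ, hψ]
      rw [X1] at hX1
      field_simp
      field_simp at hX1
      linear_combination hX1
    exact sub_eq_zero.1 (mip_self_eq_zero.1 hzero)

theorem mip_eq_zero_of_mip_self_eq {A B : ℝ → M2} {c : ℝ} (hA : ∀ t, HasDerivAt A (B t) t)
    (hc : ∀ t, mip (A t) (A t) = c) (t : ℝ) : mip (A t) (B t) = 0 := by
  have h := hasDerivAt_mip (hA t) (hA t)
  rw [show (fun s => mip (A s) (A s)) = fun _ => c from funext hc, mip_comm (B t)] at h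
  linarith [h.unique (hasDerivAt_const t c)]

theorem mip_add_mip_accel_eq_zero_of_mip_self_eq {κ c : ℝ} {A B : ℝ → M2}
    (hA : ∀ t, HasDerivAt A (B t) t) (hB : ∀ t, HasDerivAt B (accel κ (A t) (B t)) t)
    (hc : ∀ t, mip (A t) (A t) = c) (t : ℝ) :
    mip (B t) (B t) + mip (A t) (accel κ (A t) (B t)) = 0 := by
  have h := hasDerivAt_mip (hA t) (hB t)
  rw [show (fun s => mip (A s) (B s)) = fun _ => 0 from funext (mip_eq_zero_of_mip_self_eq hA hc)]
    at h
  exact h.unique (hasDerivAt_const t 0)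

theorem rigid_iff_general (κ : ℝ) (A₀ B₀ : M2)
    (hdet : A₀.det = 1) (htan : mip B₀ (cofm A₀) = 0) (hA₀ : 2 < mip A₀ A₀)
    (A : ℝ → M2) (hA : ContDiff ℝ 2 A)
    (hA0 : A 0 = A₀) (hB0 : deriv A 0 = B₀)
    (hode : ∀ t : ℝ, deriv (deriv A) t + κ • A t
      = Lam κ (A t) (deriv A t) • cofm (A t)) :
    (∀ t : ℝ, fnorm (A t) = fnorm A₀) ↔
      (X1 κ A₀ B₀ = (1/2) * (X2 A₀ B₀ ^ 2 / ((1/2) * mip A₀ A₀ - 1)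
          + X3 A₀ B₀ ^ 2 / ((1/2) * mip A₀ A₀ + 1)) + (κ/2) * mip A₀ A₀ ∧
        X2 A₀ B₀ ^ 2 / ((1/2) * mip A₀ A₀ - 1) ^ 2
          + X3 A₀ B₀ ^ 2 / ((1/2) * mip A₀ A₀ + 1) ^ 2 = 2 * κ) := by
  obtain ⟨hAd, -, hA'd⟩ := (contDiff_succ_iff_deriv (n := 1)).1 (by rwa [one_add_one_eq_two])
  have hA' t : HasDerivAt A (deriv A t) t := (hAd t).hasDerivAt
  have hB' t : HasDerivAt (deriv A) (accel κ (A t) (deriv A t)) t :=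
    (hA'd.differentiable one_ne_zero t).hasDerivAt.congr_deriv (eq_sub_of_add_eq (hode t))
  change _ ↔ RigidityConditions κ A₀ B₀
  constructor
  · intro hrigid
    have hc t : mip (A t) (A t) = mip A₀ A₀ :=
      (Real.sqrt_inj (mip_self_nonneg _) (mip_self_nonneg _)).1 (hrigid t)
    have horth := mip_eq_zero_of_mip_self_eq hA' hc 0
    have henergy := mip_add_mip_accel_eq_zero_of_mip_self_eq hA' hB' hc 0
    rw [hA0, hB0] at horth henergy
    exact rigidityConditions_of_mip_eq_zero hdet htan hA₀ horth henergy
  · intro h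
    obtain ⟨a, b, hκ, rfl⟩ := exists_eq_rotGen_of_rigidityConditions hdet hA₀ h
    have hD := mem_tangentSL2_of_hasDerivAt hA' hB' (t₀ := 0)
      (by rw [hA0, hB0]; exact ⟨hdet, htan⟩)
    have huniq : (fun t => (A t, deriv A t))
        = fun t => (rotationCurve a b A₀ t, rotationCurve a b (rotGen a b A₀) t) :=
      ODE_solution_unique_of_contDiffAt (t₀ := 0)
        (fun t => contDiffAt_flowField κ (mip_self_pos_of_det_eq_one (hD t).1).ne')
        (fun t => (hA' t).prodMk (hB' t)) (hasDerivAt_rotationPhase hκ hdet (by linarith))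
        (by simp [hA0, hB0, rotationCurve_zero])
    intro t
    have hAt : A t = rotationCurve a b A₀ t := congrArg Prod.fst (congrFun huniq t)
    rw [fnorm, fnorm, hAt, mip_rotationCurve_self]

/-- characterization of rigid solutions with |A₀|² > 2. -/
theorem rigid_iff (κ : ℝ) (hκ : 0 ≤ κ) (A₀ B₀ : M2)
    (hdet : A₀.det = 1) (htan : mip B₀ (cofm A₀) = 0) (hA₀ : 2 < mip A₀ A₀)
    (A : ℝ → M2) (hA : ContDiff ℝ 2 A)
    (hA0 : A 0 = A₀) (hB0 : deriv A 0 = B₀)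
    (hode : ∀ t : ℝ, deriv (deriv A) t + κ • A t
      = Lam κ (A t) (deriv A t) • cofm (A t)) :
    (∀ t : ℝ, fnorm (A t) = fnorm A₀) ↔
      (X1 κ A₀ B₀ = (1/2) * (X2 A₀ B₀ ^ 2 / ((1/2) * mip A₀ A₀ - 1)
          + X3 A₀ B₀ ^ 2 / ((1/2) * mip A₀ A₀ + 1)) + (κ/2) * mip A₀ A₀ ∧
        X2 A₀ B₀ ^ 2 / ((1/2) * mip A₀ A₀ - 1) ^ 2
          + X3 A₀ B₀ ^ 2 / ((1/2) * mip A₀ A₀ + 1) ^ 2 = 2 * κ) :=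
  rigid_iff_general κ A₀ B₀ hdet htan hA₀ A hA hA0 hB0 hode
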